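/- Every boundary set B of the infinite good set S = {y₁, y₂, …} has exactly 3 elements; consequently S is a full set (a maximal good subset of the product of its projections). -/

import Mathlib

open scoped BigOperators

/-- Symbols: x₁,x₂,x₃,x₄ are 0,1,2,3 and αⱼ = j+3 (so all symbols are distinct naturals). -/
def α (j : ℕ) : ℕ := j + 3

/-- The points y₁, y₂, y₃, … of the paper's construction. -/
def y : ℕ → Fin 4 → ℕ := fun k =>
  if k = 1 then ![0, 1, 2, 3]
  else if k = 2 then ![0, 1, α 1, α 2]
  else match k % 4 with
    | 1 => ![0, α (k - 1), α k, α (k + 1)]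
    | 2 => ![α (k - 3), 1, α (k - 1), α k]
    | 3 => ![α k, α (k + 1), 2, α (k - 1)]
    | _ => ![α (k - 1), α k, α (k - 3), 3]

/-- u = (u₁,u₂,u₃,u₄) solves equation (1) for f on S. -/
def Solves (S : Set (Fin 4 → ℕ)) (f : (Fin 4 → ℕ) → ℂ) (u : Fin 4 → ℕ → ℂ) : Prop :=
  ∀ p ∈ S, f p = ∑ i, u i (p i)

/-- S is good: every complex function on S decomposes into coordinate functions. -/
def IsGood (S : Set (Fin 4 → ℕ)) : Prop := ∀ f, ∃ u, Solves S f u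

/-- i-th projection of S. -/
def proj (S : Set (Fin 4 → ℕ)) (i : Fin 4) : Set ℕ := (fun p => p i) '' S

/-- B is a boundary set of S: for every f and every prescription U on B,
equation (1) admits a solution agreeing with U on B, unique on the projections of S. -/
def IsBoundary (S : Set (Fin 4 → ℕ)) (B : Set ℕ) : Prop :=
  B ⊆ ⋃ i, proj S i ∧
  ∀ f : (Fin 4 → ℕ) → ℂ, ∀ U : ℕ → ℂ,
    (∃ u, Solves S f u ∧ ∀ i, ∀ a ∈ B ∩ proj S i, u i a = U a) ∧
    ∀ u v, Solves S f u → (∀ i, ∀ a ∈ B ∩ proj S i, u i a = U a) →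
      Solves S f v → (∀ i, ∀ a ∈ B ∩ proj S i, v i a = U a) →
      ∀ i, ∀ a ∈ proj S i, u i a = v i a

/-- S is full: a maximal good subset of the product of its projections. -/
def IsFull (S : Set (Fin 4 → ℕ)) : Prop :=
  IsGood S ∧ ∀ T : Set (Fin 4 → ℕ), S ⊆ T → (∀ p ∈ T, ∀ i, p i ∈ proj S i) →
    IsGood T → T = S

/-- Sₙ = {y₁,…,y_N}. -/
def Sn (N : ℕ) : Set (Fin 4 → ℕ) := y '' Set.Icc 1 N

/-- The infinite set S = {y₁, y₂, …}. -/
def Sinf : Set (Fin 4 → ℕ) := y '' Set.Ici 1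

/-- The extra point z = zₙ = (α_{4n−1}, x₂, α_{4n−3}, x₄). -/
def z (n : ℕ) : Fin 4 → ℕ := ![α (4 * n - 1), 1, α (4 * n - 3), 3]

/-- Two points of S are related iff some finite full subset of S contains both. -/
def Related (S : Set (Fin 4 → ℕ)) (p q : Fin 4 → ℕ) : Prop :=
  ∃ K, K ⊆ S ∧ K.Finite ∧ IsFull K ∧ p ∈ K ∧ q ∈ K

/-- The 4n×4n incidence matrix A_{4n}: rows y₂,…,y_{4n},zₙ; columns α₁,…,α_{4n}. -/
def A (n : ℕ) : Matrix (Fin (4 * n)) (Fin (4 * n)) ℚ :=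
  Matrix.of fun i j =>
    if ∃ k, (if (i : ℕ) = 4 * n - 1 then z n else y ((i : ℕ) + 2)) k = (j : ℕ) + 4
    then 1 else 0

/-! The points `y (2m+1)` and `y (2m+2)` (`m ≥ 1`) share the fresh symbols `α (2m+1), α (2m+2)`
and differ in one symbol of the previous pair and one of the symbols `0, 1, 2, 3`. Hence the
equation at `y (2m+1)` fixes the sum of the values on the new pair (given the previous one), and the
difference of the two equations fixes the difference of the values on the previous pair. Solving
these relations recursively shows that `Sinf` is good; for `f = 0` they force every solution to be
constant on each projection, with constants summing to zero. This rigidity makes `Sinf` maximal,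
and it forces a boundary set to fix one value in each of exactly three of the four (disjoint)
projections. -/

open Function

/-- Solutions of `f = u₁ + u₂ + u₃ + u₄` on `S` are unique on the projections up to constants `rᵢ`
with `∑ rᵢ = 0`; it suffices to say this for `f = 0`, as the difference of two solutions solves
that equation. -/
def IsRigid (S : Set (Fin 4 → ℕ)) : Prop :=
  ∀ w, Solves S 0 w → ∃ r : Fin 4 → ℂ, ∑ i, r i = 0 ∧ ∀ i, ∀ a ∈ proj S i, w i a = r i

section

variable {S : Set (Fin 4 → ℕ)} {B : Set ℕ}

lemma solves_zero_const {r : Fin 4 → ℂ} (hr : ∑ i, r i = 0) : Solves S 0 (fun i _ => r i) :=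
  fun _ _ => hr.symm

theorem IsRigid.isFull (hS : IsRigid S) (hgood : IsGood S) : IsFull S := by
  refine ⟨hgood, fun T hST hproj hT => (hST.antisymm fun p hp => ?_).symm⟩
  by_contra hpS
  classical
  obtain ⟨u, hu⟩ := hT fun q => if q = p then 1 else 0
  obtain ⟨r, hr, hconst⟩ := hS u fun q hq => by
    simpa [ne_of_mem_of_not_mem hq hpS] using hu q (hST hq)
  have hp1 : (1 : ℂ) = ∑ i, u i (p i) := by simpa using hu p hp
  rw [Finset.sum_congr rfl fun i _ => hconst i _ (hproj p hp i), hr] at hp1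
  exact one_ne_zero hp1

lemma IsBoundary.inter_proj_subsingleton (hB : IsBoundary S B) (hS : IsRigid S) (i : Fin 4) :
    (B ∩ proj S i).Subsingleton := by
  intro a ha b hb
  by_contra hab
  classical
  obtain ⟨u, hu, huB⟩ := (hB.2 0 fun s => if s = a then 0 else 1).1
  obtain ⟨r, -, hconst⟩ := hS u hu
  have h := (huB i a ha).symm.trans <|
    (hconst i a ha.2).trans <| (hconst i b hb.2).symm.trans (huB i b hb)
  simp [Ne.symm hab] at h

lemma IsBoundary.exists_inter_proj_eq_empty (hB : IsBoundary S B) (hS : IsRigid S) :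
    ∃ i, B ∩ proj S i = ∅ := by
  by_contra! h
  choose a ha using h
  obtain ⟨u, hu, huB⟩ := (hB.2 0 1).1
  obtain ⟨r, hr, hconst⟩ := hS u hu
  have hr1 : ∀ i, r i = 1 := fun i => (hconst i _ (ha i).2).symm.trans (huB i _ (ha i))
  simp [hr1] at hr

lemma IsBoundary.inter_proj_nonempty (hB : IsBoundary S B) (hne : ∀ i, (proj S i).Nonempty)
    {i j : Fin 4} (hij : i ≠ j) (hj : B ∩ proj S j = ∅) : (B ∩ proj S i).Nonempty := by
  by_contra hi
  rw [Set.not_nonempty_iff_eq_empty] at hi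
  set r : Fin 4 → ℂ := Pi.single i 1 - Pi.single j 1
  have hrB : ∀ k, ∀ a ∈ B ∩ proj S k, r k = 0 := by
    intro k a ha
    have hki : k ≠ i := by rintro rfl; simp [hi] at ha
    have hkj : k ≠ j := by rintro rfl; simp [hj] at ha
    simp [r, hki, hkj]
  obtain ⟨a, ha⟩ := hne i
  have := (hB.2 0 0).2 (fun k _ => r k) 0 (solves_zero_const (by simp [r])) hrB
    (solves_zero_const (r := 0) (by simp)) (by simp) i a ha
  simp [r, hij] at this

theorem IsRigid.ncard_eq_three_of_isBoundary (hS : IsRigid S)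
    (hdisj : Pairwise (Disjoint on proj S)) (hne : ∀ i, (proj S i).Nonempty)
    (hB : IsBoundary S B) : B.ncard = 3 := by
  obtain ⟨i₀, hi₀⟩ := hB.exists_inter_proj_eq_empty hS
  have hcard : ∀ i, (B ∩ proj S i).ncard = if i = i₀ then 0 else 1 := by
    intro i
    split_ifs with h
    · simp [h, hi₀]
    · obtain ⟨a, ha⟩ := hB.inter_proj_nonempty hne h hi₀
      exact Set.ncard_eq_one.mpr ⟨a, (hB.inter_proj_subsingleton hS i).eq_singleton_of_mem ha⟩
  have hunion : B = ⋃ i, B ∩ proj S i := by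
    rw [← Set.inter_iUnion, Set.inter_eq_left.mpr hB.1]
  rw [hunion, Set.ncard_iUnion_of_finite (fun i => (hB.inter_proj_subsingleton hS i).finite)
    fun i j hij => (hdisj hij).mono Set.inter_subset_right Set.inter_subset_right,
    finsum_eq_sum_of_fintype]
  simp [hcard, Finset.sum_ite, Finset.filter_ne']

end

lemma y_one : y 1 = ![0, 1, 2, 3] := rfl

lemma y_two : y 2 = ![0, 1, α 1, α 2] := rfl

lemma y_four_mul_add_three (n : ℕ) :
    y (4 * n + 3) = ![α (4 * n + 3), α (4 * n + 4), 2, α (4 * n + 2)] := by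
  simp only [y, show (4 * n + 3) % 4 = 3 by omega, show 4 * n + 3 - 1 = 4 * n + 2 by omega]
  simp

lemma y_four_mul_add_four (n : ℕ) :
    y (4 * n + 4) = ![α (4 * n + 3), α (4 * n + 4), α (4 * n + 1), 3] := by
  simp only [y, show (4 * n + 4) % 4 = 0 by omega, show 4 * n + 4 - 1 = 4 * n + 3 by omega,
    show 4 * n + 4 - 3 = 4 * n + 1 by omega]
  simp

lemma y_four_mul_add_five (n : ℕ) :
    y (4 * n + 5) = ![0, α (4 * n + 4), α (4 * n + 5), α (4 * n + 6)] := by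
  simp only [y, show (4 * n + 5) % 4 = 1 by omega, show 4 * n + 5 - 1 = 4 * n + 4 by omega]
  simp

lemma y_four_mul_add_six (n : ℕ) :
    y (4 * n + 6) = ![α (4 * n + 3), 1, α (4 * n + 5), α (4 * n + 6)] := by
  simp only [y, show (4 * n + 6) % 4 = 2 by omega, show 4 * n + 6 - 1 = 4 * n + 5 by omega,
    show 4 * n + 6 - 3 = 4 * n + 3 by omega]
  simp

lemma forall_mem_Sinf {P : (Fin 4 → ℕ) → Prop} :
    (∀ p ∈ Sinf, P p) ↔ P (y 1) ∧ P (y 2) ∧ ∀ n,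
      P (y (4 * n + 3)) ∧ P (y (4 * n + 4)) ∧ P (y (4 * n + 5)) ∧ P (y (4 * n + 6)) := by
  simp only [Sinf, Set.forall_mem_image, Set.mem_Ici]
  refine ⟨fun h => ⟨h le_rfl, h (by norm_num), fun n => ⟨h (by omega), h (by omega),
    h (by omega), h (by omega)⟩⟩, fun ⟨h1, h2, h⟩ k hk => ?_⟩
  obtain rfl | rfl | ⟨n, rfl | rfl | rfl | rfl⟩ :
      k = 1 ∨ k = 2 ∨ ∃ n, k = 4 * n + 3 ∨ k = 4 * n + 4 ∨ k = 4 * n + 5 ∨ k = 4 * n + 6 := by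
    rcases Nat.lt_or_ge k 3 with h | h
    · omega
    · exact Or.inr (Or.inr ⟨(k - 3) / 4, by omega⟩)
  exacts [h1, h2, (h n).1, (h n).2.1, (h n).2.2.1, (h n).2.2.2]

/-- `α j = j + 3` occurs only in coordinate `(j + 1) % 4`. -/
def symbolCoord (s : ℕ) : ℕ := if s < 4 then s else (s + 2) % 4

lemma symbolCoord_apply_of_mem_Sinf : ∀ p ∈ Sinf, ∀ i : Fin 4, symbolCoord (p i) = i := by
  refine forall_mem_Sinf.mpr ⟨fun i => ?_, fun i => ?_, fun n => ⟨fun i => ?_, fun i => ?_,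
    fun i => ?_, fun i => ?_⟩⟩ <;> fin_cases i <;>
  simp [symbolCoord, α, y_one, y_two, y_four_mul_add_three, y_four_mul_add_four,
    y_four_mul_add_five, y_four_mul_add_six] <;> split_ifs <;> omega

lemma pairwise_disjoint_proj_Sinf : Pairwise (Disjoint on proj Sinf) := by
  intro i j hij
  refine Set.disjoint_left.mpr ?_
  rintro _ ⟨p, hp, rfl⟩ ⟨q, hq, hqp⟩
  have hi := symbolCoord_apply_of_mem_Sinf p hp i
  have hj := symbolCoord_apply_of_mem_Sinf q hq j
  rw [show q j = p i from hqp, hi] at hj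
  exact hij (Fin.ext hj)

lemma proj_Sinf_nonempty (i : Fin 4) : (proj Sinf i).Nonempty :=
  ⟨y 1 i, y 1, ⟨1, Set.self_mem_Ici, rfl⟩, rfl⟩

lemma solves_Sinf_iff {f : (Fin 4 → ℕ) → ℂ} {u : Fin 4 → ℕ → ℂ} :
    Solves Sinf f u ↔
      f (y 1) = u 0 0 + u 1 1 + u 2 2 + u 3 3 ∧
      f (y 2) = u 0 0 + u 1 1 + u 2 (α 1) + u 3 (α 2) ∧ ∀ n,
        f (y (4 * n + 3)) = u 0 (α (4 * n + 3)) + u 1 (α (4 * n + 4)) + u 2 2 +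
          u 3 (α (4 * n + 2)) ∧
        f (y (4 * n + 4)) = u 0 (α (4 * n + 3)) + u 1 (α (4 * n + 4)) + u 2 (α (4 * n + 1)) +
          u 3 3 ∧
        f (y (4 * n + 5)) = u 0 0 + u 1 (α (4 * n + 4)) + u 2 (α (4 * n + 5)) +
          u 3 (α (4 * n + 6)) ∧
        f (y (4 * n + 6)) = u 0 (α (4 * n + 3)) + u 1 1 + u 2 (α (4 * n + 5)) +
          u 3 (α (4 * n + 6)) := by
  simp only [Solves, forall_mem_Sinf, Fin.sum_univ_four]
  simp [y_one, y_two, y_four_mul_add_three, y_four_mul_add_four, y_four_mul_add_five,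
    y_four_mul_add_six]

/-- The value at `α j` of a solution that takes the value `f (y 1) / 4` at each of `0, 1, 2, 3`.
The value at `α 0` is fictitious: it makes the sum relation `alphaValue_add_add` hold at `j = 0`. -/
noncomputable def alphaValue (f : (Fin 4 → ℕ) → ℂ) : ℕ → ℂ
  | 0 => f (y 1) - f (y 2) + f (y 1) / 4
  | j + 1 =>
    if Even j then
      (f (y (j + 1)) - f (y 1) / 4 - alphaValue f j + (f (y (j + 4)) - f (y (j + 3)))) / 2
    else alphaValue f j - (f (y (j + 3)) - f (y (j + 2)))

lemma alphaValue_add_add {f : (Fin 4 → ℕ) → ℂ} {j : ℕ} (hj : Even j) :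
    alphaValue f (j + 1) + alphaValue f (j + 2) + alphaValue f j =
      f (y (j + 1)) - f (y 1) / 4 := by
  have hj' : ¬ Even (j + 1) := Nat.not_even_iff_odd.mpr hj.add_one
  simp only [alphaValue, hj, hj', if_true, if_false]
  ring

lemma alphaValue_sub {f : (Fin 4 → ℕ) → ℂ} {j : ℕ} (hj : Even j) :
    alphaValue f (j + 1) - alphaValue f (j + 2) = f (y (j + 4)) - f (y (j + 3)) := by
  have hj' : ¬ Even (j + 1) := Nat.not_even_iff_odd.mpr hj.add_one
  rw [alphaValue.eq_2 f (j + 1)]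
  simp only [hj', if_false, add_assoc, Nat.reduceAdd]
  ring

noncomputable def solutionSinf (f : (Fin 4 → ℕ) → ℂ) (_ : Fin 4) (s : ℕ) : ℂ :=
  if s ≤ 3 then f (y 1) / 4 else alphaValue f (s - 3)

lemma solutionSinf_of_le {f : (Fin 4 → ℕ) → ℂ} {i : Fin 4} {s : ℕ} (hs : s ≤ 3) :
    solutionSinf f i s = f (y 1) / 4 :=
  if_pos hs

lemma solutionSinf_alpha {f : (Fin 4 → ℕ) → ℂ} {i : Fin 4} {j : ℕ} (hj : j ≠ 0) :
    solutionSinf f i (α j) = alphaValue f j := by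
  simp only [solutionSinf, α, Nat.add_sub_cancel]
  exact if_neg (by omega)

lemma solves_solutionSinf (f : (Fin 4 → ℕ) → ℂ) : Solves Sinf f (solutionSinf f) := by
  rw [solves_Sinf_iff]
  simp (disch := omega) only [solutionSinf_of_le, solutionSinf_alpha]
  have hsum (j : ℕ) (hj : Even j) := alphaValue_add_add (f := f) hj
  have hsub (j : ℕ) (hj : Even j) := alphaValue_sub (f := f) hj
  have s0 := hsum 0 Even.zero
  simp only [alphaValue.eq_1, zero_add] at s0
  refine ⟨by ring, by linear_combination -s0, fun n => ?_⟩
  have s2 := hsum (4 * n + 2) ⟨2 * n + 1, by ring⟩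
  have s4 := hsum (4 * n + 4) ⟨2 * n + 2, by ring⟩
  have d0 := hsub (4 * n) ⟨2 * n, by ring⟩
  have d2 := hsub (4 * n + 2) ⟨2 * n + 1, by ring⟩
  simp only [add_assoc, Nat.reduceAdd] at s2 s4 d0 d2
  refine ⟨?_, ?_, ?_, ?_⟩
  · linear_combination -s2
  · linear_combination -s2 - d0
  · linear_combination -s4
  · linear_combination -s4 - d2

lemma isGood_Sinf : IsGood Sinf := fun f => ⟨solutionSinf f, solves_solutionSinf f⟩

lemma apply_alpha_eq_of_solves_zero {w : Fin 4 → ℕ → ℂ} (hw : Solves Sinf 0 w) (n : ℕ) :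
    w 2 (α (4 * n + 1)) = w 2 2 ∧ w 3 (α (4 * n + 2)) = w 3 3 ∧
      w 0 (α (4 * n + 3)) = w 0 0 ∧ w 1 (α (4 * n + 4)) = w 1 1 := by
  obtain ⟨h1, h2, h⟩ := solves_Sinf_iff.mp hw
  simp only [Pi.zero_apply] at h1 h2 h
  have of_sum : ∀ n, w 2 (α (4 * n + 1)) + w 3 (α (4 * n + 2)) = w 2 2 + w 3 3 →
      w 2 (α (4 * n + 1)) = w 2 2 ∧ w 3 (α (4 * n + 2)) = w 3 3 ∧
        w 0 (α (4 * n + 3)) = w 0 0 ∧ w 1 (α (4 * n + 4)) = w 1 1 := by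
    intro n hsum
    obtain ⟨h3, h4, h5, h6⟩ := h n
    have e2 : w 2 (α (4 * n + 1)) = w 2 2 := by linear_combination (hsum + h3 - h4) / 2
    have e3 : w 3 (α (4 * n + 2)) = w 3 3 := by linear_combination hsum - e2
    have e0 : w 0 (α (4 * n + 3)) = w 0 0 := by linear_combination (h1 - h3 + h5 - h6 - e3) / 2
    exact ⟨e2, e3, e0, by linear_combination e0 + h6 - h5⟩
  refine of_sum n ?_
  induction n with
  | zero => linear_combination h1 - h2
  | succ n ih =>
    rw [show 4 * (n + 1) + 1 = 4 * n + 5 by ring, show 4 * (n + 1) + 2 = 4 * n + 6 by ring]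
    linear_combination h1 - (h n).2.2.1 - (of_sum n ih).2.2.2

lemma isRigid_Sinf : IsRigid Sinf := by
  intro w hw
  refine ⟨fun i => w i i, by simpa [Fin.sum_univ_four] using (solves_Sinf_iff.mp hw).1.symm, ?_⟩
  suffices ∀ p ∈ Sinf, ∀ i, w i (p i) = w i i by
    rintro i _ ⟨p, hp, rfl⟩
    exact this p hp i
  refine forall_mem_Sinf.mpr ⟨fun i => ?_, fun i => ?_, fun n => ?_⟩
  · fin_cases i <;> rfl
  · obtain ⟨e2, e3, -⟩ := apply_alpha_eq_of_solves_zero hw 0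
    fin_cases i <;> simp [y_two, e2, e3]
  · obtain ⟨e2, e3, e0, e1⟩ := apply_alpha_eq_of_solves_zero hw n
    obtain ⟨e6, e7, -⟩ := apply_alpha_eq_of_solves_zero hw (n + 1)
    simp only [show 4 * (n + 1) + 1 = 4 * n + 5 by ring,
      show 4 * (n + 1) + 2 = 4 * n + 6 by ring] at e6 e7
    refine ⟨fun i => ?_, fun i => ?_, fun i => ?_, fun i => ?_⟩ <;> fin_cases i <;>
      simp [y_four_mul_add_three, y_four_mul_add_four, y_four_mul_add_five, y_four_mul_add_six, *]

/-- every boundary set of S has exactly 3 elements; hence S is full. -/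
theorem stmt_9 :
    (∀ B : Set ℕ, IsBoundary Sinf B → B.ncard = 3) ∧ IsFull Sinf :=
  ⟨fun _ hB => isRigid_Sinf.ncard_eq_three_of_isBoundary pairwise_disjoint_proj_Sinf
    proj_Sinf_nonempty hB, isRigid_Sinf.isFull isGood_Sinf⟩
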